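/- (Conditional score-projection identity, Theorem A.1 with Gaussian kernel.) Let p be a probability density on ℝⁿ, α ∈ ℝ, σ > 0, with Gaussian transition kernel q(x|x₀) and smoothed marginal p_t(x) = ∫ p(x₀) q(x|x₀) dx₀; p_t is everywhere positive and differentiable, with marginal score s_{p_t}(x) = ∇ log p_t(x) and conditional score ∇ₓ log q(x|x₀) = −(x − α·x₀)/σ². Let u : ℝⁿ → ℝⁿ be measurable and assume the joint integrability conditions ∫∫ p(x₀) q(x|x₀) ‖u(x)‖·(‖s_{p_t}(x)‖ + ‖x − α·x₀‖/σ²) dx dx₀ < ∞. Then ∫∫ p(x₀) q(x|x₀) ⟨u(x), s_{p_t}(x) − ∇ₓ log q(x|x₀)⟩ dx dx₀ = 0. -/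

import Mathlib

open MeasureTheory Real
open scoped RealInnerProductSpace

/-- The Gaussian transition kernel
`q(x|x₀) = (2πσ²)^(−n/2) · exp(−‖x − α·x₀‖²/(2σ²))` on `ℝⁿ`. -/
noncomputable def gaussKernel (n : ℕ) (α σ : ℝ)
    (x x₀ : EuclideanSpace ℝ (Fin n)) : ℝ :=
  (2 * π * σ ^ 2) ^ (-(n : ℝ) / 2) * Real.exp (-‖x - α • x₀‖ ^ 2 / (2 * σ ^ 2))

/-- The smoothed marginal `p_t(x) = ∫ p(x₀) q(x|x₀) dx₀`. -/
noncomputable def smoothedMarginal (n : ℕ) (p : EuclideanSpace ℝ (Fin n) → ℝ)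
    (α σ : ℝ) (x : EuclideanSpace ℝ (Fin n)) : ℝ :=
  ∫ x₀, p x₀ * gaussKernel n α σ x x₀

/-- The marginal score `s_{p_t}(x) = ∇ log p_t(x)`. -/
noncomputable def marginalScore (n : ℕ) (p : EuclideanSpace ℝ (Fin n) → ℝ)
    (α σ : ℝ) (x : EuclideanSpace ℝ (Fin n)) : EuclideanSpace ℝ (Fin n) :=
  gradient (fun y => Real.log (smoothedMarginal n p α σ y)) x

/-!
Since `q(x|x₀) ‖x − α·x₀‖ ≤ (2πσ²)^(−n/2) σ` uniformly, `p ∈ L¹` dominates the derivative of the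
integrand, so `∇p_t(x) = ∫ p(x₀) ∇ₓq(x|x₀) dx₀`; moreover `∇p_t = p_t · s_{p_t}` where `p_t > 0`. Hence for every fixed `x` the conditional integral
`∫ p(x₀) q(x|x₀) (s_{p_t}(x) − ∇ₓ log q(x|x₀)) dx₀ = ∇p_t(x) − ∇p_t(x)` vanishes, and the
integrability hypothesis lets Fubini's theorem integrate this over `x`.
-/

lemma HasGradientAt.log {F : Type*} [NormedAddCommGroup F] [InnerProductSpace ℝ F]
    [CompleteSpace F] {f : F → ℝ} {g x : F} (hf : HasGradientAt f g x) (hx : f x ≠ 0) :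
    HasGradientAt (fun y => Real.log (f y)) ((f x)⁻¹ • g) x := by
  rw [hasGradientAt_iff_hasFDerivAt, map_smul]
  exact hf.hasFDerivAt.log hx

lemma measurable_gradient {F : Type*} [NormedAddCommGroup F] [InnerProductSpace ℝ F]
    [CompleteSpace F] [MeasurableSpace F] [BorelSpace F] (f : F → ℝ) :
    Measurable (gradient f) :=
  (InnerProductSpace.toDual ℝ F).symm.continuous.measurable.comp (measurable_fderiv ℝ f)

lemma norm_inner_add_inv_smul_le {F : Type*} [NormedAddCommGroup F] [InnerProductSpace ℝ F]
    (u v w : F) {c : ℝ} (hc : 0 ≤ c) : ‖⟪u, v + c⁻¹ • w⟫‖ ≤ ‖u‖ * (‖v‖ + ‖w‖ / c) := by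
  refine (norm_inner_le_norm _ _).trans (mul_le_mul_of_nonneg_left ?_ (norm_nonneg _))
  refine (norm_add_le _ _).trans_eq ?_
  rw [norm_smul, norm_inv, norm_of_nonneg hc, inv_mul_eq_div]

lemma mul_exp_neg_sq_div_le {σ : ℝ} (hσ : 0 < σ) (t : ℝ) :
    t * exp (-t ^ 2 / (2 * σ ^ 2)) ≤ σ := by
  have h_amgm : t ≤ σ * (t ^ 2 / (2 * σ ^ 2) + 1) := by
    field_simp
    nlinarith [sq_nonneg (t - σ)]
  have h_exp := add_one_le_exp (t ^ 2 / (2 * σ ^ 2))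
  rw [neg_div, exp_neg, ← div_eq_mul_inv, div_le_iff₀ (exp_pos _)]
  nlinarith

section GaussianKernel

variable {n : ℕ} {α σ : ℝ}

local notation "E" => EuclideanSpace ℝ (Fin n)

lemma gaussKernel_nonneg (x x₀ : E) : 0 ≤ gaussKernel n α σ x x₀ := by
  unfold gaussKernel
  positivity

lemma gaussKernel_le (x x₀ : E) :
    gaussKernel n α σ x x₀ ≤ (2 * π * σ ^ 2) ^ (-(n : ℝ) / 2) := by
  unfold gaussKernel
  refine mul_le_of_le_one_right (by positivity) (exp_le_one_iff.mpr ?_)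
  exact div_nonpos_of_nonpos_of_nonneg (neg_nonpos.mpr (by positivity)) (by positivity)

lemma gaussKernel_mul_norm_le (hσ : 0 < σ) (x x₀ : E) :
    gaussKernel n α σ x x₀ * ‖x - α • x₀‖ ≤ (2 * π * σ ^ 2) ^ (-(n : ℝ) / 2) * σ := by
  unfold gaussKernel
  rw [mul_assoc, mul_comm (exp _)]
  exact mul_le_mul_of_nonneg_left (mul_exp_neg_sq_div_le hσ _) (by positivity)

lemma continuous_gaussKernel : Continuous fun z : E × E => gaussKernel n α σ z.1 z.2 := by
  unfold gaussKernel
  fun_prop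

lemma hasGradientAt_gaussKernel (x x₀ : E) :
    HasGradientAt (gaussKernel n α σ · x₀)
      ((-(σ ^ 2)⁻¹ * gaussKernel n α σ x x₀) • (x - α • x₀)) x := by
  have h_exponent : HasFDerivAt (fun y : E => -‖y - α • x₀‖ ^ 2 / (2 * σ ^ 2))
      (-(σ ^ 2)⁻¹ • innerSL ℝ (x - α • x₀)) x := by
    refine ((((hasFDerivAt_id x).sub_const (α • x₀)).norm_sq.const_mul
      (-(2 * σ ^ 2)⁻¹)).congr_of_eventuallyEq (.of_forall fun y => ?_)).congr_fderiv ?_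
    · simp only [id]
      ring
    · ext v
      simp only [ContinuousLinearMap.comp_id, id, smul_apply,
        coe_innerSL_apply, smul_eq_mul, nsmul_eq_mul]
      ring
  rw [hasGradientAt_iff_hasFDerivAt]
  refine (h_exponent.exp.const_mul ((2 * π * σ ^ 2) ^ (-(n : ℝ) / 2))).congr_fderiv ?_
  ext v
  simp only [gaussKernel, InnerProductSpace.toDual_apply_apply, smul_apply,
    coe_innerSL_apply, smul_eq_mul, real_inner_smul_left]
  ring

end GaussianKernel

section SmoothedMarginal

variable {n : ℕ} {α σ : ℝ} {p : EuclideanSpace ℝ (Fin n) → ℝ}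

local notation "E" => EuclideanSpace ℝ (Fin n)

lemma integrable_mul_gaussKernel (hp : Integrable p) (x : E) :
    Integrable fun x₀ => p x₀ * gaussKernel n α σ x x₀ := by
  refine hp.mul_bdd (c := (2 * π * σ ^ 2) ^ (-(n : ℝ) / 2))
    (continuous_gaussKernel.comp (Continuous.prodMk_right x)).aestronglyMeasurable
    (Filter.Eventually.of_forall fun x₀ => ?_)
  rw [norm_of_nonneg (gaussKernel_nonneg x x₀)]
  exact gaussKernel_le x x₀

lemma norm_mul_gaussKernel_smul_le (hσ : 0 < σ) (x x₀ : E) :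
    ‖(p x₀ * gaussKernel n α σ x x₀) • (x - α • x₀)‖ ≤
      (2 * π * σ ^ 2) ^ (-(n : ℝ) / 2) * σ * ‖p x₀‖ := by
  rw [norm_smul, norm_mul, norm_of_nonneg (gaussKernel_nonneg x x₀), mul_assoc, mul_comm]
  exact mul_le_mul_of_nonneg_right (gaussKernel_mul_norm_le hσ x x₀) (norm_nonneg _)

lemma integrable_mul_gaussKernel_smul (hσ : 0 < σ) (hp : Integrable p) (x : E) :
    Integrable fun x₀ => (p x₀ * gaussKernel n α σ x x₀) • (x - α • x₀) :=
  (hp.norm.const_mul _).mono'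
    ((integrable_mul_gaussKernel hp x).aestronglyMeasurable.smul (by fun_prop))
    (Filter.Eventually.of_forall (norm_mul_gaussKernel_smul_le hσ x))

lemma hasGradientAt_smoothedMarginal (hσ : 0 < σ) (hp : Integrable p) (x : E) :
    HasGradientAt (smoothedMarginal n p α σ)
      (-(σ ^ 2)⁻¹ • ∫ x₀, (p x₀ * gaussKernel n α σ x x₀) • (x - α • x₀)) x := by
  let ψ : E → E → E := fun y x₀ => -(σ ^ 2)⁻¹ • (p x₀ * gaussKernel n α σ y x₀) • (y - α • x₀)
  have h_int : Integrable (ψ x) := (integrable_mul_gaussKernel_smul (α := α) hσ hp x).fun_smul _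
  have h_deriv : HasFDerivAt (smoothedMarginal n p α σ)
      (∫ x₀, InnerProductSpace.toDual ℝ E (ψ x x₀)) x := by
    refine hasFDerivAt_integral_of_dominated_of_fderiv_le
      (F' := fun y x₀ => InnerProductSpace.toDual ℝ E (ψ y x₀))
      (bound := fun x₀ => (σ ^ 2)⁻¹ * ((2 * π * σ ^ 2) ^ (-(n : ℝ) / 2) * σ * ‖p x₀‖))
      Filter.univ_mem (Filter.Eventually.of_forall fun y =>
        (integrable_mul_gaussKernel hp y).aestronglyMeasurable)
      (integrable_mul_gaussKernel hp x)
      ((InnerProductSpace.toDual ℝ E).continuous.comp_aestronglyMeasurable h_int.1)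
      (Filter.Eventually.of_forall fun x₀ y _ => ?_) ((hp.norm.const_mul _).const_mul _)
      (Filter.Eventually.of_forall fun x₀ y _ => ?_)
    · rw [LinearIsometryEquiv.norm_map, norm_smul, norm_neg, norm_inv, norm_pow, norm_eq_abs,
        sq_abs]
      exact mul_le_mul_of_nonneg_left (norm_mul_gaussKernel_smul_le hσ y x₀) (by positivity)
    · refine ((hasGradientAt_gaussKernel y x₀).hasFDerivAt.const_mul (p x₀)).congr_fderiv ?_
      rw [← map_smul, smul_smul, mul_left_comm, mul_smul]
  rw [hasGradientAt_iff_hasFDerivAt, ← integral_smul]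
  exact (InnerProductSpace.toDual ℝ E).toLinearIsometry.integral_comp_comm (ψ x) ▸ h_deriv

lemma smoothedMarginal_smul_marginalScore (hσ : 0 < σ) (hp : Integrable p) {x : E}
    (hx : smoothedMarginal n p α σ x ≠ 0) :
    smoothedMarginal n p α σ x • marginalScore n p α σ x =
      -(σ ^ 2)⁻¹ • ∫ x₀, (p x₀ * gaussKernel n α σ x x₀) • (x - α • x₀) := by
  rw [marginalScore, ((hasGradientAt_smoothedMarginal hσ hp x).log hx).gradient, smul_smul,
    mul_inv_cancel₀ hx, one_smul]

lemma integral_mul_gaussKernel_inner_marginalScore_add_eq_zero (hσ : 0 < σ) (hp : Integrable p)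
    {x : E} (hx : smoothedMarginal n p α σ x ≠ 0) (v : E) :
    ∫ x₀, p x₀ * gaussKernel n α σ x x₀ *
      ⟪v, marginalScore n p α σ x + (σ ^ 2)⁻¹ • (x - α • x₀)⟫ = 0 := by
  have h_split : (fun x₀ => (p x₀ * gaussKernel n α σ x x₀) •
      (marginalScore n p α σ x + (σ ^ 2)⁻¹ • (x - α • x₀))) = fun x₀ =>
      (p x₀ * gaussKernel n α σ x x₀) • marginalScore n p α σ x +
        (σ ^ 2)⁻¹ • (p x₀ * gaussKernel n α σ x x₀) • (x - α • x₀) := by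
    ext1 x₀
    rw [smul_add, smul_comm]
  have h_score := (integrable_mul_gaussKernel (α := α) (σ := σ) hp x).smul_const
    (marginalScore n p α σ x)
  have h_shift := (integrable_mul_gaussKernel_smul (α := α) hσ hp x).fun_smul (σ ^ 2)⁻¹
  have h_marginal : ∫ x₀, p x₀ * gaussKernel n α σ x x₀ = smoothedMarginal n p α σ x := rfl
  simp_rw [← real_inner_smul_right]
  rw [integral_inner (h_split ▸ h_score.add h_shift), h_split, integral_add h_score h_shift,
    integral_smul_const, integral_smul, h_marginal, smoothedMarginal_smul_marginalScore hσ hp hx,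
    neg_smul, neg_add_cancel, inner_zero_right]

end SmoothedMarginal

theorem stmt_1_general (n : ℕ) (p : EuclideanSpace ℝ (Fin n) → ℝ) (α σ : ℝ) (hσ : 0 < σ)
    (hp_int : ∫ x₀, p x₀ = 1)
    (hpt_pos : ∀ x, 0 < smoothedMarginal n p α σ x)
    (u : EuclideanSpace ℝ (Fin n) → EuclideanSpace ℝ (Fin n)) (hu : Measurable u)
    (hint : Integrable (fun z : EuclideanSpace ℝ (Fin n) × EuclideanSpace ℝ (Fin n) =>
      p z.2 * gaussKernel n α σ z.1 z.2 *
        (‖u z.1‖ * (‖marginalScore n p α σ z.1‖ + ‖z.1 - α • z.2‖ / σ ^ 2)))) :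
    ∫ z : EuclideanSpace ℝ (Fin n) × EuclideanSpace ℝ (Fin n),
      p z.2 * gaussKernel n α σ z.1 z.2 *
        ⟪u z.1, marginalScore n p α σ z.1 + (σ ^ 2)⁻¹ • (z.1 - α • z.2)⟫ = 0 := by
  have hp : Integrable p := .of_integral_ne_zero (by simp [hp_int])
  have h_int : Integrable (fun z : EuclideanSpace ℝ (Fin n) × EuclideanSpace ℝ (Fin n) =>
      p z.2 * gaussKernel n α σ z.1 z.2 *
        ⟪u z.1, marginalScore n p α σ z.1 + (σ ^ 2)⁻¹ • (z.1 - α • z.2)⟫) (volume.prod volume) := by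
    refine hint.norm.mono' ((hp.1.comp_snd.mul continuous_gaussKernel.aestronglyMeasurable).mul
      ((hu.comp measurable_fst).inner ((measurable_gradient _).comp measurable_fst |>.add
        (by fun_prop))).aestronglyMeasurable) (.of_forall fun z => ?_)
    rw [norm_mul, norm_mul _ (‖u z.1‖ * _), norm_of_nonneg (by positivity : 0 ≤ ‖u z.1‖ * _)]
    gcongr
    exact norm_inner_add_inv_smul_le _ _ _ (sq_nonneg σ)
  rw [Measure.volume_eq_prod, integral_prod _ h_int]
  simp only [integral_mul_gaussKernel_inner_marginalScore_add_eq_zero hσ hp (hpt_pos _).ne',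
    integral_zero]

/-- **Conditional score-projection identity** (Theorem A.1 with Gaussian kernel):
under the stated joint integrability condition,
`∫∫ p(x₀) q(x|x₀) ⟨u(x), s_{p_t}(x) − ∇ₓ log q(x|x₀)⟩ dx dx₀ = 0`,
where `∇ₓ log q(x|x₀) = −(x − α·x₀)/σ²`. -/
theorem stmt_1 (n : ℕ) (p : EuclideanSpace ℝ (Fin n) → ℝ) (α σ : ℝ) (hσ : 0 < σ)
    (hp_meas : Measurable p) (hp_nonneg : ∀ x₀, 0 ≤ p x₀)
    (hp_int : ∫ x₀, p x₀ = 1)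
    (hpt_pos : ∀ x, 0 < smoothedMarginal n p α σ x)
    (hpt_diff : Differentiable ℝ (smoothedMarginal n p α σ))
    (u : EuclideanSpace ℝ (Fin n) → EuclideanSpace ℝ (Fin n)) (hu : Measurable u)
    (hint : Integrable (fun z : EuclideanSpace ℝ (Fin n) × EuclideanSpace ℝ (Fin n) =>
      p z.2 * gaussKernel n α σ z.1 z.2 *
        (‖u z.1‖ * (‖marginalScore n p α σ z.1‖ + ‖z.1 - α • z.2‖ / σ ^ 2)))) :
    ∫ z : EuclideanSpace ℝ (Fin n) × EuclideanSpace ℝ (Fin n),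
      p z.2 * gaussKernel n α σ z.1 z.2 *
        ⟪u z.1, marginalScore n p α σ z.1 + (σ ^ 2)⁻¹ • (z.1 - α • z.2)⟫ = 0 :=
  stmt_1_general n p α σ hσ hp_int hpt_pos u hu hint
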